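/- arXiv:2503.08964 — 3 statements merged into one kernel-verified Lean document; each statement's English description precedes it below -/
import Mathlib

section
/- Let G be a connected graph on n ≥ 3 vertices and w a pendent vertex (vertex of degree 1) of G. Then rc(G) ≥ rc(G − w) and src(G) ≥ src(G − w). -/
open SimpleGraph

/-- A colouring of (potential) edges makes `G` rainbow connected if every two vertices are
joined by a path whose edges receive pairwise distinct colours. -/
def IsRainbowConnected {V β : Type*} (G : SimpleGraph V) (c : Sym2 V → β) : Prop :=
  ∀ u v : V, ∃ p : G.Walk u v, p.IsPath ∧ (p.edges.map c).Nodup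

/-- Strongly rainbow connected: every two vertices are joined by a rainbow geodesic. -/
def IsStronglyRainbowConnected {V β : Type*} (G : SimpleGraph V) (c : Sym2 V → β) : Prop :=
  ∀ u v : V, ∃ p : G.Walk u v, p.IsPath ∧ p.length = G.dist u v ∧ (p.edges.map c).Nodup

/-- The rainbow connection number. -/
noncomputable def rc {V : Type*} (G : SimpleGraph V) : ℕ :=
  sInf {r : ℕ | ∃ c : Sym2 V → Fin r, IsRainbowConnected G c}

/-- The strong rainbow connection number. -/
noncomputable def src {V : Type*} (G : SimpleGraph V) : ℕ :=
  sInf {r : ℕ | ∃ c : Sym2 V → Fin r, IsStronglyRainbowConnected G c}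

/-- The list rainbow connection number. -/
noncomputable def rcl {V : Type*} (G : SimpleGraph V) : ℕ :=
  sInf {r : ℕ | ∀ L : Sym2 V → Finset ℕ, (∀ e ∈ G.edgeSet, r ≤ (L e).card) →
    ∃ c : Sym2 V → ℕ, (∀ e ∈ G.edgeSet, c e ∈ L e) ∧ IsRainbowConnected G c}

/-- The list strong rainbow connection number. -/
noncomputable def srcl {V : Type*} (G : SimpleGraph V) : ℕ :=
  sInf {r : ℕ | ∀ L : Sym2 V → Finset ℕ, (∀ e ∈ G.edgeSet, r ≤ (L e).card) →
    ∃ c : Sym2 V → ℕ, (∀ e ∈ G.edgeSet, c e ∈ L e) ∧ IsStronglyRainbowConnected G c}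

/-- The list chromatic number (choice number) of a graph. -/
noncomputable def listChromatic {V : Type*} (H : SimpleGraph V) : ℕ :=
  sInf {r : ℕ | ∀ L : V → Finset ℕ, (∀ v, r ≤ (L v).card) →
    ∃ c : V → ℕ, (∀ v, c v ∈ L v) ∧ ∀ u v, H.Adj u v → c u ≠ c v}

/-- The wheel `W n`: a cycle `C n` together with a universal hub vertex `none`. -/
def wheel (n : ℕ) : SimpleGraph (Option (Fin n)) :=
  SimpleGraph.fromRel (fun x y =>
    (∃ a b, x = some a ∧ y = some b ∧ (cycleGraph n).Adj a b) ∨ (x = none ∧ y ≠ none))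

/-- The Petersen graph as the Kneser graph `K(5,2)`. -/
def petersen : SimpleGraph {s : Finset (Fin 5) // s.card = 2} where
  Adj a b := Disjoint a.1 b.1
  symm := ⟨fun a b h => h.symm⟩
  loopless := ⟨fun a h => by
    have h0 : a.1 = ∅ := disjoint_self.mp h
    have := a.2
    rw [h0] at this
    simp at this⟩

/-- The square of the cycle `C n`: vertices at distance at most 2 are adjacent. -/
def cycleSq (n : ℕ) : SimpleGraph (Fin n) where
  Adj a b := a ≠ b ∧ (cycleGraph n).dist a b ≤ 2
  symm := by
    refine ⟨?_⟩
    intro a b h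
    exact ⟨h.1.symm, by rw [SimpleGraph.dist_comm]; exact h.2⟩
  loopless := ⟨fun a h => h.1 rfl⟩

/-- A path between two vertices different from a pendent vertex `w` avoids `w`. -/
lemma path_avoids_pendent {V : Type*} (G : SimpleGraph V) (w : V)
    (hw : (G.neighborSet w).ncard = 1) :
    ∀ {u v : V} (p : G.Walk u v), p.IsPath → u ≠ w → v ≠ w → w ∉ p.support := by
  intro u v p
  induction p with
  | nil => intro _ hu _ h; simp only [SimpleGraph.Walk.support_nil, List.mem_singleton] at h
           exact hu h.symm
  | @cons u x v h q ih =>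
    intro hp hu hv hmem
    rw [SimpleGraph.Walk.support_cons, List.mem_cons] at hmem
    rcases hmem with h1 | h2
    · exact hu h1.symm
    by_cases hx : x = w
    · subst hx
      -- q : Walk x v with x = w, q is a path, v ≠ w
      cases q with
      | nil => exact hv rfl
      | @cons _ y _ h' q' =>
        obtain ⟨z, hz⟩ := Set.ncard_eq_one.mp hw
        have hu' : u ∈ G.neighborSet x := h.symm
        have hy' : y ∈ G.neighborSet x := h'
        rw [hz] at hu' hy'
        have huy : u = y := by
          rw [Set.mem_singleton_iff] at hu' hy'; rw [hu', hy']
        have := hp.support_nodup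
        rw [SimpleGraph.Walk.support_cons, SimpleGraph.Walk.support_cons] at this
        have hne := (List.nodup_cons.mp this).1
        exact hne (by rw [huy]; simp)
    · have hq : q.IsPath := hp.of_cons
      exact ih hq hx hv h2

/-- Lift a walk avoiding the complement of `s` to the induced subgraph. -/
lemma walk_lift {V : Type*} (G : SimpleGraph V) (s : Set V) :
    ∀ {u v : V} (p : G.Walk u v) (hsup : ∀ x ∈ p.support, x ∈ s),
    ∃ p' : (G.induce s).Walk ⟨u, hsup u p.start_mem_support⟩ ⟨v, hsup v p.end_mem_support⟩,
      p'.edges.map (Sym2.map Subtype.val) = p.edges ∧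
      p'.support.map Subtype.val = p.support := by
  intro u v p
  induction p with
  | nil => intro hsup; exact ⟨SimpleGraph.Walk.nil, by simp, by simp⟩
  | @cons u x v h q ih =>
    intro hsup
    have hsq : ∀ y ∈ q.support, y ∈ s := fun y hy => hsup y (by simp [hy])
    obtain ⟨q', hq1, hq2⟩ := ih hsq
    have hadj : (G.induce s).Adj ⟨u, hsup u (SimpleGraph.Walk.cons h q).start_mem_support⟩
        ⟨x, hsq x q.start_mem_support⟩ := by
      simp only [SimpleGraph.comap_adj, Function.Embedding.coe_subtype]
      exact h
    refine ⟨SimpleGraph.Walk.cons hadj q', ?_, ?_⟩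
    · rw [SimpleGraph.Walk.edges_cons, SimpleGraph.Walk.edges_cons, List.map_cons, hq1]
      rfl
    · rw [SimpleGraph.Walk.support_cons, SimpleGraph.Walk.support_cons, List.map_cons, hq2]

/-- Theorem: deleting a pendent vertex does not increase `rc` or `src`. -/
theorem stmt3 {V : Type*} [Fintype V] (G : SimpleGraph V) (hG : G.Connected)
    (hn : 3 ≤ Fintype.card V) (w : V) (hw : (G.neighborSet w).ncard = 1) :
    rc (G.induce {u : V | u ≠ w}) ≤ rc G ∧ src (G.induce {u : V | u ≠ w}) ≤ src G := by
  classical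
  set s : Set V := {u : V | u ≠ w} with hs
  -- A generic construction: from a path in G between vertices of s, get one in the induced graph.
  have key : ∀ (u v : s) (p : G.Walk u.1 v.1), p.IsPath →
      ∃ p' : (G.induce s).Walk u v, p'.IsPath ∧
        p'.edges.map (Sym2.map Subtype.val) = p.edges ∧ p'.length = p.length := by
    intro u v p hp
    have hav := path_avoids_pendent G w hw p hp u.2 v.2
    have hsup : ∀ x ∈ p.support, x ∈ s := by
      intro x hx
      intro hxw
      exact hav (hxw ▸ hx)
    obtain ⟨p', h1, h2⟩ := walk_lift G s p hsup
    refine ⟨p'.copy (Subtype.ext rfl) (Subtype.ext rfl), ?_, ?_, ?_⟩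
    · rw [SimpleGraph.Walk.isPath_def]
      apply SimpleGraph.Walk.IsPath.support_nodup at hp
      rw [← h2] at hp
      simpa using (List.Nodup.of_map _ hp)
    · simpa using h1
    · have := congrArg List.length h1
      rw [List.length_map] at this
      rw [SimpleGraph.Walk.length_copy, ← SimpleGraph.Walk.length_edges,
        ← SimpleGraph.Walk.length_edges, this]
  -- distances agree
  have hdist : ∀ u v : s, (G.induce s).dist u v = G.dist u.1 v.1 := by
    intro u v
    obtain ⟨p, hp, hlen⟩ := (hG u.1 v.1).exists_path_of_dist
    obtain ⟨p', hp', _, hlen'⟩ := key u v p hp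
    apply le_antisymm
    · calc (G.induce s).dist u v ≤ p'.length := SimpleGraph.dist_le p'
        _ = G.dist u.1 v.1 := by rw [hlen', hlen]
    · have hr : (G.induce s).Reachable u v := ⟨p'⟩
      obtain ⟨q, hq⟩ := hr.exists_walk_length_eq_dist
      have := SimpleGraph.dist_le (q.map (SimpleGraph.Embedding.induce s).toHom)
      rwa [SimpleGraph.Walk.length_map, hq] at this
  constructor
  · -- rc
    have hne : {r : ℕ | ∃ c : Sym2 V → Fin r, IsRainbowConnected G c}.Nonempty := by
      refine ⟨Fintype.card (Sym2 V), (Fintype.equivFin (Sym2 V)), ?_⟩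
      intro u v
      obtain ⟨p, hp, _⟩ := (hG u v).exists_path_of_dist
      exact ⟨p, hp, (hp.edges_nodup).map (Fintype.equivFin (Sym2 V)).injective⟩
    obtain ⟨c, hc⟩ := Nat.sInf_mem hne
    apply Nat.sInf_le
    refine ⟨fun e => c (Sym2.map Subtype.val e), ?_⟩
    intro u v
    obtain ⟨p, hp, hnd⟩ := hc u.1 v.1
    obtain ⟨p', hp', he, _⟩ := key u v p hp
    refine ⟨p', hp', ?_⟩
    have : p'.edges.map (fun e => c (Sym2.map Subtype.val e)) = p.edges.map c := by
      rw [← he, List.map_map]; rfl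
    exact (congrArg List.Nodup this).mpr hnd
  · -- src
    have hne : {r : ℕ | ∃ c : Sym2 V → Fin r, IsStronglyRainbowConnected G c}.Nonempty := by
      refine ⟨Fintype.card (Sym2 V), (Fintype.equivFin (Sym2 V)), ?_⟩
      intro u v
      obtain ⟨p, hp, hlen⟩ := (hG u v).exists_path_of_dist
      exact ⟨p, hp, hlen, (hp.edges_nodup).map (Fintype.equivFin (Sym2 V)).injective⟩
    obtain ⟨c, hc⟩ := Nat.sInf_mem hne
    apply Nat.sInf_le
    refine ⟨fun e => c (Sym2.map Subtype.val e), ?_⟩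
    intro u v
    obtain ⟨p, hp, hlen, hnd⟩ := hc u.1 v.1
    obtain ⟨p', hp', he, hlen'⟩ := key u v p hp
    refine ⟨p', hp', by rw [hlen', hlen, hdist], ?_⟩
    have : p'.edges.map (fun e => c (Sym2.map Subtype.val e)) = p.edges.map c := by
      rw [← he, List.map_map]; rfl
    exact (congrArg List.Nodup this).mpr hnd
end

section
/- For 2 ≤ m ≤ n, the list strong rainbow connection number of the complete bipartite graph K_{m,n} equals ⌈n^{1/m}⌉ (the m-th root of n rounded up). -/
open SimpleGraph

section SrclAux

open Finset

lemma srcl_build_rows (m n r : ℕ) (hr : 2 ≤ r) (hn : n ≤ r ^ m)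
    (ℓ : ℕ → Fin m → Finset ℕ) (hℓ : ∀ i a, r ≤ (ℓ i a).card) :
    ∀ k, k ≤ n → ∃ M : ℕ → Fin m → ℕ,
      (∀ i < k, ∀ a, M i a ∈ ℓ i a) ∧
      (∀ i < k, ∀ j < k, i ≠ j → M i ≠ M j) ∧
      (∀ i < k, ∀ a a' : Fin m, (a : ℕ) = i → a < a' → M i a ≠ M i a') := by
  intro k
  induction k with
  | zero => exact fun _ => ⟨fun _ _ => 0, by omega, by omega, by omega⟩
  | succ k ih =>
    intro hk1
    obtain ⟨M, hMmem, hMinj, hMcol⟩ := ih (by omega)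
    by_cases hkm : k < m
    · -- constrained row
      set ak : Fin m := ⟨k, hkm⟩ with hak
      have hne : (ℓ k ak).Nonempty := Finset.card_pos.mp (by have := hℓ k ak; omega)
      set x : ℕ := (ℓ k ak).min' hne with hx
      have hxmem : x ∈ ℓ k ak := Finset.min'_mem _ _
      set s : Fin m → Finset ℕ :=
        fun a => if a = ak then {x} else if ak < a then (ℓ k a).erase x else ℓ k a with hs
      set C : Finset (Fin m → ℕ) := Fintype.piFinset s with hC
      have hCcard : k < C.card := by
        have h1 : C.card = ∏ a : Fin m, (s a).card := Fintype.card_piFinset s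
        have h2 : (∏ a : Fin m, (if a < ak then 2 else 1)) ≤ ∏ a : Fin m, (s a).card := by
          apply Finset.prod_le_prod
          · intro a _; positivity
          · intro a _
            by_cases h : a < ak
            · simp only [if_pos h]
              have hne2 : a ≠ ak := ne_of_lt h
              have hng : ¬ ak < a := not_lt_of_gt h
              simp only [hs, if_neg hne2, if_neg hng]
              have := hℓ k a; omega
            · simp only [if_neg h]
              by_cases h2 : a = ak
              · simp [hs, h2]
              · have hlt : ak < a := by
                  rcases lt_trichotomy a ak with h' | h' | h' <;>
                    first | exact absurd h' h | exact absurd h' h2 | exact h'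
                simp only [hs, if_neg h2, if_pos hlt]
                have h3 := hℓ k a
                have h5 : ((ℓ k a).erase x).card ≥ (ℓ k a).card - 1 :=
                  Finset.pred_card_le_card_erase
                omega
        have h3 : (∏ a : Fin m, (if a < ak then 2 else 1)) = 2 ^ k := by
          rw [Finset.prod_ite, Finset.prod_const, Finset.prod_const, one_pow, mul_one]
          congr 1
          have he : (univ.filter (fun a => a < ak)) = Finset.Iio ak := by ext a; simp
          rw [he, Fin.card_Iio]
        have h4 : k < 2 ^ k := Nat.lt_two_pow_self
        omega
      set prev : Finset (Fin m → ℕ) := (Finset.range k).image (fun i => M i) with hprev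
      have hprevcard : prev.card ≤ k :=
        le_trans Finset.card_image_le (by simp)
      have hex : ∃ v ∈ C, v ∉ prev := by
        by_contra h
        push_neg at h
        have := Finset.card_le_card h
        omega
      obtain ⟨v, hvC, hvprev⟩ := hex
      have hv := Fintype.mem_piFinset.mp hvC
      have hvx : v ak = x := by
        have := hv ak
        simpa [hs] using this
      refine ⟨Function.update M k v, ?_, ?_, ?_⟩
      · intro i hi a
        rcases Nat.lt_succ_iff_lt_or_eq.mp hi with h | h
        · rw [Function.update_of_ne (by omega)]; exact hMmem i h a
        · subst h
          rw [Function.update_self]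
          have hva := hv a
          by_cases h2 : a = ak
          · subst h2; rw [hvx]; exact hxmem
          · by_cases h3 : ak < a
            · simp only [hs, if_neg h2, if_pos h3] at hva
              exact Finset.mem_of_mem_erase hva
            · simp only [hs, if_neg h2, if_neg h3] at hva
              exact hva
      · intro i hi j hj hij
        rcases Nat.lt_succ_iff_lt_or_eq.mp hi with h | h <;>
          rcases Nat.lt_succ_iff_lt_or_eq.mp hj with h' | h'
        · rw [Function.update_of_ne (by omega), Function.update_of_ne (by omega)]
          exact hMinj i h j h' hij
        · subst h'
          rw [Function.update_of_ne (by omega), Function.update_self]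
          intro heq
          exact hvprev (Finset.mem_image.mpr ⟨i, Finset.mem_range.mpr h, heq⟩)
        · subst h
          rw [Function.update_self, Function.update_of_ne (by omega)]
          intro heq
          exact hvprev (Finset.mem_image.mpr ⟨j, Finset.mem_range.mpr h', heq.symm⟩)
        · omega
      · intro i hi a a' ha haa'
        rcases Nat.lt_succ_iff_lt_or_eq.mp hi with h | h
        · rw [Function.update_of_ne (by omega)]; exact hMcol i h a a' ha haa'
        · subst h
          rw [Function.update_self]
          have haak : a = ak := Fin.ext ha
          subst haak
          have hva' := hv a'
          simp only [hs, if_neg (ne_of_gt haa'), if_pos haa'] at hva'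
          rw [hvx]
          exact fun heq => (Finset.ne_of_mem_erase hva') heq.symm
    · -- free row
      set C : Finset (Fin m → ℕ) := Fintype.piFinset (fun a => ℓ k a) with hC
      have hCcard : k < C.card := by
        have h1 : C.card = ∏ a : Fin m, (ℓ k a).card := Fintype.card_piFinset _
        have h2 : (∏ _a : Fin m, r) ≤ ∏ a : Fin m, (ℓ k a).card :=
          Finset.prod_le_prod (by intro a _; positivity) (fun a _ => hℓ k a)
        have h3 : (∏ _a : Fin m, r) = r ^ m := by
          rw [Finset.prod_const, Finset.card_univ, Fintype.card_fin]
        omega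
      set prev : Finset (Fin m → ℕ) := (Finset.range k).image (fun i => M i) with hprev
      have hprevcard : prev.card ≤ k :=
        le_trans Finset.card_image_le (by simp)
      have hex : ∃ v ∈ C, v ∉ prev := by
        by_contra h
        push_neg at h
        have := Finset.card_le_card h
        omega
      obtain ⟨v, hvC, hvprev⟩ := hex
      have hv := Fintype.mem_piFinset.mp hvC
      refine ⟨Function.update M k v, ?_, ?_, ?_⟩
      · intro i hi a
        rcases Nat.lt_succ_iff_lt_or_eq.mp hi with h | h
        · rw [Function.update_of_ne (by omega)]; exact hMmem i h a
        · subst h; rw [Function.update_self]; exact hv a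
      · intro i hi j hj hij
        rcases Nat.lt_succ_iff_lt_or_eq.mp hi with h | h <;>
          rcases Nat.lt_succ_iff_lt_or_eq.mp hj with h' | h'
        · rw [Function.update_of_ne (by omega), Function.update_of_ne (by omega)]
          exact hMinj i h j h' hij
        · subst h'
          rw [Function.update_of_ne (by omega), Function.update_self]
          intro heq
          exact hvprev (Finset.mem_image.mpr ⟨i, Finset.mem_range.mpr h, heq⟩)
        · subst h
          rw [Function.update_self, Function.update_of_ne (by omega)]
          intro heq
          exact hvprev (Finset.mem_image.mpr ⟨j, Finset.mem_range.mpr h', heq.symm⟩)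
        · omega
      · intro i hi a a' ha haa'
        rcases Nat.lt_succ_iff_lt_or_eq.mp hi with h | h
        · rw [Function.update_of_ne (by omega)]; exact hMcol i h a a' ha haa'
        · subst h
          exact absurd (ha ▸ a.isLt) hkm

section CBG

variable {m n : ℕ}

local notation "G" => completeBipartiteGraph (Fin m) (Fin n)

lemma cbg_adj_lr (a : Fin m) (b : Fin n) : (G).Adj (Sum.inl a) (Sum.inr b) := by
  simp [completeBipartiteGraph]

lemma cbg_not_adj_ll (a a' : Fin m) : ¬ (G).Adj (Sum.inl a) (Sum.inl a') := by
  simp [completeBipartiteGraph]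

lemma cbg_not_adj_rr (b b' : Fin n) : ¬ (G).Adj (Sum.inr b) (Sum.inr b') := by
  simp [completeBipartiteGraph]

lemma cbg_dist_lr (a : Fin m) (b : Fin n) : (G).dist (Sum.inl a) (Sum.inr b) = 1 :=
  dist_eq_one_iff_adj.mpr (cbg_adj_lr a b)

lemma cbg_dist_rl (a : Fin m) (b : Fin n) : (G).dist (Sum.inr b) (Sum.inl a) = 1 :=
  dist_eq_one_iff_adj.mpr (cbg_adj_lr a b).symm

lemma cbg_dist_ll (hn : 0 < n) {a a' : Fin m} (h : a ≠ a') :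
    (G).dist (Sum.inl a) (Sum.inl a') = 2 := by
  have b : Fin n := ⟨0, hn⟩
  set p : (G).Walk (Sum.inl a) (Sum.inl a') :=
    Walk.cons (cbg_adj_lr a b) (Walk.cons (cbg_adj_lr a' b).symm Walk.nil) with hp
  have h2 : (G).dist (Sum.inl a) (Sum.inl a') ≤ 2 := dist_le p
  have h0 : (G).dist (Sum.inl a) (Sum.inl a') ≠ 0 := by
    rw [Ne, dist_eq_zero_iff_eq_or_not_reachable]
    push_neg
    exact ⟨by simp [h], p.reachable⟩
  have h1 : (G).dist (Sum.inl a) (Sum.inl a') ≠ 1 := by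
    rw [Ne, dist_eq_one_iff_adj]
    exact cbg_not_adj_ll a a'
  omega

lemma cbg_dist_rr (hm : 0 < m) {b b' : Fin n} (h : b ≠ b') :
    (G).dist (Sum.inr b) (Sum.inr b') = 2 := by
  have a : Fin m := ⟨0, hm⟩
  set p : (G).Walk (Sum.inr b) (Sum.inr b') :=
    Walk.cons (cbg_adj_lr a b).symm (Walk.cons (cbg_adj_lr a b') Walk.nil) with hp
  have h2 : (G).dist (Sum.inr b) (Sum.inr b') ≤ 2 := dist_le p
  have h0 : (G).dist (Sum.inr b) (Sum.inr b') ≠ 0 := by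
    rw [Ne, dist_eq_zero_iff_eq_or_not_reachable]
    push_neg
    exact ⟨by simp [h], p.reachable⟩
  have h1 : (G).dist (Sum.inr b) (Sum.inr b') ≠ 1 := by
    rw [Ne, dist_eq_one_iff_adj]
    exact cbg_not_adj_rr b b'
  omega

/-- destructure a length-2 walk -/
lemma walk_length_two {V : Type*} {G' : SimpleGraph V} {u v : V} (p : G'.Walk u v)
    (hp : p.length = 2) :
    ∃ (w : V) (h1 : G'.Adj u w) (h2 : G'.Adj w v),
      p = Walk.cons h1 (Walk.cons h2 Walk.nil) := by
  cases p with
  | nil => simp at hp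
  | cons h q =>
    cases q with
    | nil => simp at hp
    | cons h' q' =>
      cases q' with
      | nil => exact ⟨_, h, h', rfl⟩
      | cons h'' q'' => simp [SimpleGraph.Walk.length_cons] at hp

end CBG

end SrclAux

/-- Theorem: for `2 ≤ m ≤ n`, `src^ℓ(K_{m,n}) = ⌈n^{1/m}⌉`, the least `r` with `n ≤ r^m`. -/
theorem stmt14 (m n : ℕ) (hm : 2 ≤ m) (hmn : m ≤ n) :
    srcl (completeBipartiteGraph (Fin m) (Fin n)) = sInf {r : ℕ | n ≤ r ^ m} := by
  have hn2 : 2 ≤ n := le_trans hm hmn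
  set r : ℕ := sInf {r : ℕ | n ≤ r ^ m} with hrdef
  have hTne : ({r : ℕ | n ≤ r ^ m}).Nonempty := ⟨n, Nat.le_self_pow (by omega) n⟩
  have hrpow : n ≤ r ^ m := Nat.sInf_mem hTne
  have hr2 : 2 ≤ r := by
    by_contra h
    push_neg at h
    have : r ^ m ≤ 1 ^ m := Nat.pow_le_pow_left (by omega) m
    simp at this
    omega
  set G := completeBipartiteGraph (Fin m) (Fin n) with hG
  -- upper bound: r is in the srcl set
  have hup : r ∈ {s : ℕ | ∀ L : Sym2 (Fin m ⊕ Fin n) → Finset ℕ,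
      (∀ e ∈ G.edgeSet, s ≤ (L e).card) →
      ∃ c : Sym2 (Fin m ⊕ Fin n) → ℕ, (∀ e ∈ G.edgeSet, c e ∈ L e) ∧
        IsStronglyRainbowConnected G c} := by
    intro L hL
    set ℓ : ℕ → Fin m → Finset ℕ :=
      fun i a => if h : i < n then L s(Sum.inl a, Sum.inr (⟨i, h⟩ : Fin n))
        else Finset.range r with hℓdef
    have hℓcard : ∀ i a, r ≤ (ℓ i a).card := by
      intro i a
      by_cases h : i < n
      · simp only [hℓdef, dif_pos h]
        exact hL _ ((mem_edgeSet _).mpr (cbg_adj_lr a ⟨i, h⟩))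
      · simp [hℓdef, dif_neg h]
    obtain ⟨M, hMmem, hMinj, hMcol⟩ :=
      srcl_build_rows m n r hr2 hrpow ℓ hℓcard n le_rfl
    have hMmem' : ∀ (b : Fin n) (a : Fin m), M b a ∈ L s(Sum.inl a, Sum.inr b) := by
      intro b a
      have := hMmem b b.isLt a
      simpa [hℓdef, dif_pos b.isLt] using this
    -- column witness for any pair
    have hcol : ∀ a a' : Fin m, a ≠ a' → ∃ b : Fin n, M b a ≠ M b a' := by
      intro a a' hne
      rcases lt_or_gt_of_ne hne with h | h
      · exact ⟨⟨a.val, lt_of_lt_of_le a.isLt hmn⟩,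
          hMcol a.val (lt_of_lt_of_le a.isLt hmn) a a' rfl h⟩
      · exact ⟨⟨a'.val, lt_of_lt_of_le a'.isLt hmn⟩,
          fun he => hMcol a'.val (lt_of_lt_of_le a'.isLt hmn) a' a rfl h he.symm⟩
    have hrow : ∀ b b' : Fin n, b ≠ b' → ∃ a : Fin m, M b a ≠ M b' a := by
      intro b b' hne
      have := hMinj b b.isLt b' b'.isLt (fun h => hne (Fin.ext h))
      exact Function.ne_iff.mp this
    set c : Sym2 (Fin m ⊕ Fin n) → ℕ := Sym2.lift ⟨fun x y =>
      match x, y with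
      | Sum.inl a, Sum.inr b => M b a
      | Sum.inr b, Sum.inl a => M b a
      | _, _ => 0,
      by intro x y; rcases x with a | b <;> rcases y with a' | b' <;> rfl⟩ with hcdef
    have hclr : ∀ (a : Fin m) (b : Fin n), c s(Sum.inl a, Sum.inr b) = M b a := fun _ _ => rfl
    have hcrl : ∀ (a : Fin m) (b : Fin n), c s(Sum.inr b, Sum.inl a) = M b a := fun _ _ => rfl
    refine ⟨c, ?_, ?_⟩
    · intro e he
      induction e with
      | _ x y =>
        rw [mem_edgeSet] at he
        rcases x with a | b <;> rcases y with a' | b'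
        · exact absurd he (cbg_not_adj_ll a a')
        · rw [hclr]; exact hMmem' b' a
        · rw [hcrl]
          rw [Sym2.eq_swap]
          exact hMmem' b a'
        · exact absurd he (cbg_not_adj_rr b b')
    · intro u v
      rcases u with a | b <;> rcases v with a' | b'
      · by_cases hne : a = a'
        · subst hne
          exact ⟨Walk.nil, Walk.IsPath.nil, (SimpleGraph.dist_self (G := G)).symm, by simp⟩
        · obtain ⟨b, hb⟩ := hcol a a' hne
          refine ⟨Walk.cons (cbg_adj_lr a b) (Walk.cons (cbg_adj_lr a' b).symm Walk.nil),
            ?_, ?_, ?_⟩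
          · simp [Walk.isPath_def, hne]
          · rw [cbg_dist_ll (by omega) hne]; rfl
          · simp only [Walk.edges_cons, Walk.edges_nil, List.map_cons, List.map_nil,
              hclr, hcrl]
            simp [hb]
      · exact ⟨Walk.cons (cbg_adj_lr a b') Walk.nil, by simp [Walk.isPath_def],
          by rw [cbg_dist_lr]; rfl, by simp⟩
      · exact ⟨Walk.cons (cbg_adj_lr a' b).symm Walk.nil, by simp [Walk.isPath_def],
          by rw [cbg_dist_rl]; rfl, by simp⟩
      · by_cases hne : b = b'
        · subst hne
          exact ⟨Walk.nil, Walk.IsPath.nil, (SimpleGraph.dist_self (G := G)).symm, by simp⟩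
        · obtain ⟨a, ha⟩ := hrow b b' hne
          refine ⟨Walk.cons (cbg_adj_lr a b).symm (Walk.cons (cbg_adj_lr a b') Walk.nil),
            ?_, ?_, ?_⟩
          · simp [Walk.isPath_def, hne]
          · rw [cbg_dist_rr (by omega) hne]; rfl
          · simp only [Walk.edges_cons, Walk.edges_nil, List.map_cons, List.map_nil,
              hclr, hcrl]
            simp [ha]
  -- lower bound
  have hlow : ∀ s ∈ {s : ℕ | ∀ L : Sym2 (Fin m ⊕ Fin n) → Finset ℕ,
      (∀ e ∈ G.edgeSet, s ≤ (L e).card) →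
      ∃ c : Sym2 (Fin m ⊕ Fin n) → ℕ, (∀ e ∈ G.edgeSet, c e ∈ L e) ∧
        IsStronglyRainbowConnected G c}, r ≤ s := by
    intro s hs
    by_contra hlt
    push_neg at hlt
    have hspow : s ∉ {r : ℕ | n ≤ r ^ m} := Nat.notMem_of_lt_sInf hlt
    obtain ⟨c, hc, hsrc⟩ := hs (fun _ => Finset.range s) (fun e _ => by simp)
    have hcv : ∀ (a : Fin m) (b : Fin n), c s(Sum.inl a, Sum.inr b) < s := by
      intro a b
      have := hc _ ((mem_edgeSet _).mpr (cbg_adj_lr a b))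
      simpa using this
    set F : Fin n → Fin m → Fin s := fun b a => ⟨c s(Sum.inl a, Sum.inr b), hcv a b⟩ with hF
    have hFinj : Function.Injective F := by
      intro b b' hbe
      by_contra hne
      obtain ⟨p, hpath, hlen, hnd⟩ := hsrc (Sum.inr b) (Sum.inr b')
      rw [cbg_dist_rr (by omega) hne] at hlen
      obtain ⟨w, h1, h2, hpe⟩ := walk_length_two p hlen
      rcases w with a | b'' 
      · subst hpe
        simp only [Walk.edges_cons, Walk.edges_nil, List.map_cons, List.map_nil] at hnd
        have hnd' : c s(Sum.inr b, Sum.inl a) ≠ c s(Sum.inl a, Sum.inr b') := by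
          simpa using hnd
        rw [Sym2.eq_swap] at hnd'
        apply hnd'
        have := congrFun hbe a
        simpa [hF, Fin.ext_iff] using this
      · exact absurd h1 (cbg_not_adj_rr b b'')
    have hcard : n ≤ s ^ m := by
      have := Fintype.card_le_of_injective F hFinj
      simpa [Fintype.card_fun] using this
    exact hspow hcard
  -- conclude
  have : srcl G = r := le_antisymm (Nat.sInf_le hup) (le_csInf ⟨r, hup⟩ hlow)
  rw [this]
end

section
/- For 2 ≤ m ≤ n, the list rainbow connection number of the complete bipartite graph K_{m,n} equals min(⌈n^{1/m}⌉, 4). -/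
open SimpleGraph

noncomputable def avoidPick (s bad : Finset ℕ) : ℕ :=
  if h : (s \ bad).Nonempty then (s \ bad).min' h else 0

lemma avoidPick_spec {s bad : Finset ℕ} (h : bad.card < s.card) :
    avoidPick s bad ∈ s ∧ avoidPick s bad ∉ bad := by
  have hne : (s \ bad).Nonempty := by
    rw [← Finset.card_pos]
    have := Finset.card_le_card_sdiff_add_card (s := s) (t := bad)
    omega
  rw [avoidPick, dif_pos hne]
  have := (s \ bad).min'_mem hne
  rw [Finset.mem_sdiff] at this
  exact this

lemma pi_avoid {m : ℕ} (L : Fin m → Finset ℕ) (bad : Finset (Fin m → ℕ))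
    (h : bad.card < ∏ i, (L i).card) :
    ∃ f : Fin m → ℕ, (∀ i, f i ∈ L i) ∧ f ∉ bad := by
  classical
  have hcard : (Fintype.piFinset L).card = ∏ i, (L i).card := Fintype.card_piFinset L
  have hne : (Fintype.piFinset L \ bad).Nonempty := by
    rw [← Finset.card_pos]
    have := Finset.card_le_card_sdiff_add_card (s := Fintype.piFinset L) (t := bad)
    omega
  obtain ⟨f, hf⟩ := hne
  rw [Finset.mem_sdiff, Fintype.mem_piFinset] at hf
  exact ⟨f, hf.1, hf.2⟩

lemma colGreedy (k m : ℕ) (hk : 2 ≤ k) (L : Fin m → ℕ → Finset ℕ)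
    (hL : ∀ i j, k ≤ (L i j).card) :
    ∀ N, N ≤ k ^ m → ∃ a : Fin m → ℕ → ℕ,
      (∀ i j, j < N → a i j ∈ L i j) ∧
      (∀ (j : ℕ) (hj : j < m), j < N → ∀ i : Fin m, j < (i : ℕ) → a i j ≠ a ⟨j, hj⟩ j) ∧
      (∀ j j', j < j' → j' < N → ∃ i : Fin m, a i j ≠ a i j') := by
  intro N
  induction N with
  | zero => exact fun _ => ⟨fun _ _ => 0, by omega, by omega, by omega⟩
  | succ N ih =>
    intro hN
    obtain ⟨a, ha1, ha2, ha3⟩ := ih (by omega)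
    classical
    -- pick diagonal value if N < m
    set d : ℕ := if h : N < m then avoidPick (L ⟨N, h⟩ N) ∅ else 0 with hd
    set L' : Fin m → Finset ℕ := fun i =>
      if (i : ℕ) = N then {d} else if N < (i : ℕ) then (L i N).erase d else L i N with hL'
    have hd_mem : ∀ h : N < m, d ∈ L ⟨N, h⟩ N := by
      intro h
      rw [hd, dif_pos h]
      exact (avoidPick_spec (by rw [Finset.card_empty]; have := hL ⟨N, h⟩ N; omega)).1
    have hL'card1 : ∀ i : Fin m, 1 ≤ (L' i).card := by
      intro i
      rw [hL']
      dsimp only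
      split
      · simp
      · split
        · have := hL i N
          have := Finset.card_erase_of_mem (s := L i N) (a := d)
          have h2 := Finset.pred_card_le_card_erase (s := L i N) (a := d)
          omega
        · have := hL i N; omega
    have hL'card2 : ∀ i : Fin m, (i : ℕ) < N → 2 ≤ (L' i).card := by
      intro i hi
      rw [hL']
      dsimp only
      rw [if_neg (by omega), if_neg (by omega)]
      exact le_trans hk (hL i N)
    have hL'sub : ∀ i : Fin m, L' i ⊆ if (i : ℕ) = N then {d} else L i N := by
      intro i
      rw [hL']
      dsimp only
      split
      · exact Finset.Subset.refl _
      · split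
        · exact Finset.erase_subset _ _
        · exact Finset.Subset.refl _
    -- counting
    have hF : ∀ j : ℕ, (h : j < m) → ((L' ⟨j, h⟩).card) ≥ 1 := fun j h => hL'card1 ⟨j, h⟩
    set F : ℕ → ℕ := fun j => if h : j < m then (L' ⟨j, h⟩).card else 1 with hFdef
    have hprod : ∏ i : Fin m, (L' i).card = ∏ j ∈ Finset.range m, F j := by
      rw [← Fin.prod_univ_eq_prod_range F m]
      apply Finset.prod_congr rfl
      intro i _
      rw [hFdef]
      dsimp only
      rw [dif_pos i.isLt]
    -- lower bound on product
    have hbig : N < ∏ i : Fin m, (L' i).card := by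
      rw [hprod]
      by_cases hNm : N < m
      · -- product ≥ 2 ^ N > N
        have h1 : (2 : ℕ) ^ N = ∏ j ∈ Finset.range N, 2 := by
          rw [Finset.prod_const, Finset.card_range]
        have h2 : ∏ j ∈ Finset.range N, 2 ≤ ∏ j ∈ Finset.range N, F j := by
          apply Finset.prod_le_prod (fun _ _ => by omega)
          intro j hj
          rw [Finset.mem_range] at hj
          rw [hFdef]
          dsimp only
          rw [dif_pos (by omega)]
          exact hL'card2 _ hj
        have h3 : ∏ j ∈ Finset.range N, F j ≤ ∏ j ∈ Finset.range m, F j := by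
          apply Finset.prod_le_prod_of_subset_of_one_le'
          · exact Finset.range_subset_range.mpr (by omega)
          · intro j hj _
            rw [Finset.mem_range] at hj
            rw [hFdef]
            dsimp only
            rw [dif_pos hj]
            exact hL'card1 _
        have h4 := Nat.lt_two_pow_self (n := N)
        omega
      · -- product ≥ k ^ m ≥ N + 1
        have h1 : (k : ℕ) ^ m = ∏ j ∈ Finset.range m, k := by
          rw [Finset.prod_const, Finset.card_range]
        have h2 : ∏ j ∈ Finset.range m, k ≤ ∏ j ∈ Finset.range m, F j := by
          apply Finset.prod_le_prod (fun _ _ => by omega)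
          intro j hj
          rw [Finset.mem_range] at hj
          rw [hFdef]
          dsimp only
          rw [dif_pos hj]
          calc k ≤ (L ⟨j, hj⟩ N).card := hL _ _
            _ = (L' ⟨j, hj⟩).card := by
                rw [hL']
                dsimp only
                rw [if_neg (by omega), if_neg (by omega)]
        omega
    -- choose new column
    obtain ⟨f, hf1, hf2⟩ := pi_avoid L'
      ((Finset.range N).image fun j => fun i : Fin m => a i j)
      (lt_of_le_of_lt (le_trans Finset.card_image_le (by rw [Finset.card_range])) hbig)
    refine ⟨fun i j => if j = N then f i else a i j, ?_, ?_, ?_⟩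
    · intro i j hj
      dsimp only
      rcases eq_or_ne j N with rfl | hne
      · rw [if_pos rfl]
        have := hL'sub i (hf1 i)
        split at this
        · rename_i hiN
          rw [Finset.mem_singleton] at this
          have hieq : i = ⟨j, by omega⟩ := Fin.ext hiN
          rw [this, hieq]
          exact hd_mem (by omega)
        · exact this
      · rw [if_neg hne]
        exact ha1 i j (by omega)
    · intro j hj hjN i hi
      dsimp only
      rcases eq_or_ne j N with rfl | hne
      · rw [if_pos rfl, if_pos rfl]
        have h2 : f ⟨j, hj⟩ = d := by
          have := hf1 ⟨j, hj⟩
          rw [hL'] at this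
          dsimp only at this
          rw [if_pos (show ((⟨j, hj⟩ : Fin m) : ℕ) = j from rfl), Finset.mem_singleton] at this
          exact this
        have h1 : f i ∈ (L i j).erase d := by
          have := hf1 i
          rw [hL'] at this
          dsimp only at this
          rw [if_neg (by omega), if_pos (by omega)] at this
          exact this
        rw [h2]
        exact Finset.ne_of_mem_erase h1
      · rw [if_neg hne, if_neg hne]
        exact ha2 j hj (by omega) i hi
    · intro j j' hjj' hj'
      rcases eq_or_ne j' N with rfl | hne
      · have hfn : f ≠ fun i : Fin m => a i j := by
          intro heq
          exact hf2 (Finset.mem_image.mpr ⟨j, Finset.mem_range.mpr hjj', heq.symm⟩)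
        obtain ⟨i, hi⟩ := Function.ne_iff.mp hfn
        refine ⟨i, ?_⟩
        dsimp only
        rw [if_neg (by omega), if_pos rfl]
        exact fun h => hi h.symm
      · obtain ⟨i, hi⟩ := ha3 j j' hjj' (by omega)
        refine ⟨i, ?_⟩
        dsimp only
        rw [if_neg (by omega), if_neg hne]
        exact hi

variable {m n : ℕ}

abbrev KG (m n : ℕ) := completeBipartiteGraph (Fin m) (Fin n)

lemma walk_parity {x y : Fin m ⊕ Fin n} (p : (KG m n).Walk x y) :
    Even p.length ↔ (x.isLeft = y.isLeft) := by
  induction p with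
  | nil => simp
  | @cons u v w h q ih =>
    have huv : u.isLeft = !v.isLeft := by
      rcases h with ⟨h1, h2⟩ | ⟨h1, h2⟩ <;> cases u <;> cases v <;> simp_all
    rw [Walk.length_cons, Nat.even_add_one, huv]
    rw [ih] at *
    cases v <;> cases w <;> simp_all

lemma path2 {V : Type*} {G : SimpleGraph V} (c : Sym2 V → ℕ) {x y z : V}
    (hxy : G.Adj x y) (hyz : G.Adj y z) (hxz : x ≠ z)
    (hc : c s(x, y) ≠ c s(y, z)) :
    ∃ p : G.Walk x z, p.IsPath ∧ (p.edges.map c).Nodup := by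
  refine ⟨.cons hxy (.cons hyz .nil), ?_, ?_⟩
  · simp [Walk.isPath_def, hxz, hxy.ne, hyz.ne]
  · simp [hc]

lemma path4 {V : Type*} {G : SimpleGraph V} (c : Sym2 V → ℕ) {v1 v2 v3 v4 v5 : V}
    (h12 : G.Adj v1 v2) (h23 : G.Adj v2 v3) (h34 : G.Adj v3 v4) (h45 : G.Adj v4 v5)
    (n13 : v1 ≠ v3) (n14 : v1 ≠ v4) (n15 : v1 ≠ v5) (n24 : v2 ≠ v4) (n25 : v2 ≠ v5)
    (n35 : v3 ≠ v5)
    (c12 : c s(v1,v2) ≠ c s(v2,v3)) (c13 : c s(v1,v2) ≠ c s(v3,v4))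
    (c14 : c s(v1,v2) ≠ c s(v4,v5)) (c23 : c s(v2,v3) ≠ c s(v3,v4))
    (c24 : c s(v2,v3) ≠ c s(v4,v5)) (c34 : c s(v3,v4) ≠ c s(v4,v5)) :
    ∃ p : G.Walk v1 v5, p.IsPath ∧ (p.edges.map c).Nodup := by
  refine ⟨.cons h12 (.cons h23 (.cons h34 (.cons h45 .nil))), ?_, ?_⟩
  · simp [Walk.isPath_def, h12.ne, h23.ne, h34.ne, h45.ne, n13, n14, n15, n24, n25, n35]
  · simp [c12, c13, c14, c23, c24, c34]

lemma adjKG {m n : ℕ} (i : Fin m) (j : Fin n) : (KG m n).Adj (.inl i) (.inr j) := by simp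

lemma rainbow_of {m n : ℕ} (c : Sym2 (Fin m ⊕ Fin n) → ℕ)
    (rows : ∀ i i' : Fin m, i ≠ i' → ∃ j : Fin n,
      c s(Sum.inl i, Sum.inr j) ≠ c s(Sum.inl i', Sum.inr j))
    (cols : ∀ j j' : Fin n, j ≠ j' → ∃ p : (KG m n).Walk (.inr j) (.inr j'),
      p.IsPath ∧ (p.edges.map c).Nodup) :
    IsRainbowConnected (KG m n) c := by
  have single : ∀ (i : Fin m) (j : Fin n), ∃ p : (KG m n).Walk (.inl i) (.inr j),
      p.IsPath ∧ (p.edges.map c).Nodup := by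
    intro i j
    exact ⟨.cons (adjKG i j) .nil, by simp [Walk.isPath_def], by simp⟩
  rintro (i | j) (i' | j')
  · rcases eq_or_ne i i' with rfl | hne
    · exact ⟨.nil, by simp, by simp⟩
    · obtain ⟨j, hj⟩ := rows i i' hne
      exact path2 c (adjKG i j) (adjKG i' j).symm (by simp [hne]) (by rw [Sym2.eq_swap (a := Sum.inr j)]; exact hj)
  · exact single i j'
  · obtain ⟨p, hp, hnd⟩ := single i' j
    exact ⟨p.reverse, hp.reverse, by simpa [Walk.edges_reverse, List.map_reverse] using hnd⟩
  · rcases eq_or_ne j j' with rfl | hne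
    · exact ⟨.nil, by simp, by simp⟩
    · exact cols j j' hne

lemma matrixA {k m n : ℕ} (hk : 2 ≤ k) (hmn : m ≤ n) (hn : n ≤ k ^ m)
    (L : Fin m → Fin n → Finset ℕ) (hL : ∀ i j, k ≤ (L i j).card) :
    ∃ a : Fin m → Fin n → ℕ, (∀ i j, a i j ∈ L i j) ∧
      (∀ i i' : Fin m, i ≠ i' → ∃ j, a i j ≠ a i' j) ∧
      (∀ j j' : Fin n, j ≠ j' → ∃ i, a i j ≠ a i j') := by
  classical
  have hcg := colGreedy k m hk
    (fun i j => if h : j < n then L i ⟨j, h⟩ else Finset.range k)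
    (fun i j => by
      split
      · exact hL _ _
      · simp) n hn
  obtain ⟨a, ha1, ha2, ha3⟩ := hcg
  refine ⟨fun i j => a i (j : ℕ), ?_, ?_, ?_⟩
  · intro i j
    have := ha1 i (j : ℕ) j.isLt
    dsimp only at this ⊢
    rw [dif_pos j.isLt] at this
    simpa using this
  · -- rows distinct
    have key : ∀ i i' : Fin m, (i : ℕ) < (i' : ℕ) → ∃ j : Fin n, a i (j : ℕ) ≠ a i' (j : ℕ) := by
      intro i i' hlt
      refine ⟨⟨(i : ℕ), lt_of_lt_of_le i.isLt hmn⟩, ?_⟩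
      have := ha2 (i : ℕ) i.isLt (lt_of_lt_of_le i.isLt hmn) i' hlt
      simp only [Fin.eta] at this
      dsimp only
      exact fun h => this h.symm
    intro i i' hne
    rcases lt_or_gt_of_ne (fun h : (i : ℕ) = (i' : ℕ) => hne (Fin.ext h)) with h | h
    · exact key i i' h
    · obtain ⟨j, hj⟩ := key i' i h
      exact ⟨j, hj.symm⟩
  · intro j j' hne
    rcases lt_or_gt_of_ne (fun h : (j : ℕ) = (j' : ℕ) => hne (Fin.ext h)) with h | h
    · exact ha3 (j : ℕ) (j' : ℕ) h j'.isLt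
    · obtain ⟨i, hi⟩ := ha3 (j' : ℕ) (j : ℕ) h j.isLt
      exact ⟨i, hi.symm⟩

/-- build an edge colouring from a bipartite matrix -/
def toC {m n : ℕ} (a : Fin m → Fin n → ℕ) : Sym2 (Fin m ⊕ Fin n) → ℕ :=
  Sym2.lift ⟨fun x y => match x, y with
    | .inl i, .inr j => a i j
    | .inr j, .inl i => a i j
    | _, _ => 0, by rintro (i | j) (i' | j') <;> rfl⟩

@[simp] lemma toC_lr {m n : ℕ} (a : Fin m → Fin n → ℕ) (i : Fin m) (j : Fin n) :
    toC a s(Sum.inl i, Sum.inr j) = a i j := rfl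

@[simp] lemma toC_rl {m n : ℕ} (a : Fin m → Fin n → ℕ) (i : Fin m) (j : Fin n) :
    toC a s(Sum.inr j, Sum.inl i) = a i j := rfl

lemma toC_mem {m n : ℕ} (a : Fin m → Fin n → ℕ) (Ls : Sym2 (Fin m ⊕ Fin n) → Finset ℕ)
    (h : ∀ i j, a i j ∈ Ls s(Sum.inl i, Sum.inr j)) :
    ∀ e ∈ (completeBipartiteGraph (Fin m) (Fin n)).edgeSet, toC a e ∈ Ls e := by
  intro e he
  induction e with
  | _ x y =>
    rw [SimpleGraph.mem_edgeSet] at he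
    rcases x with i | j <;> rcases y with i' | j' <;> simp [completeBipartiteGraph] at he
    · exact h i j'
    · rw [Sym2.eq_swap]
      exact h i' j

lemma upper_mem {k m n : ℕ} (hk : 2 ≤ k) (hmn : m ≤ n) (hn : n ≤ k ^ m)
    (Ls : Sym2 (Fin m ⊕ Fin n) → Finset ℕ)
    (hLs : ∀ e ∈ (completeBipartiteGraph (Fin m) (Fin n)).edgeSet, k ≤ (Ls e).card) :
    ∃ c : Sym2 (Fin m ⊕ Fin n) → ℕ,
      (∀ e ∈ (completeBipartiteGraph (Fin m) (Fin n)).edgeSet, c e ∈ Ls e) ∧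
      IsRainbowConnected (completeBipartiteGraph (Fin m) (Fin n)) c := by
  obtain ⟨a, ha1, ha2, ha3⟩ := matrixA hk hmn hn (fun i j => Ls s(Sum.inl i, Sum.inr j))
    (fun i j => hLs _ ((completeBipartiteGraph _ _).mem_edgeSet.mpr (adjKG i j)))
  refine ⟨toC a, toC_mem a Ls ha1, rainbow_of (toC a) ?_ ?_⟩
  · intro i i' hne
    obtain ⟨j, hj⟩ := ha2 i i' hne
    exact ⟨j, by simpa using hj⟩
  · intro j j' hne
    refine path2 (toC a) ((adjKG (ha3 j j' hne).choose j).symm) (adjKG (ha3 j j' hne).choose j') (by simp [hne]) ?_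
    simpa using (ha3 j j' hne).choose_spec

lemma card3 (x y z : ℕ) : ({x, y, z} : Finset ℕ).card ≤ 3 := by
  calc ({x, y, z} : Finset ℕ).card ≤ ({y, z} : Finset ℕ).card + 1 := Finset.card_insert_le _ _
    _ ≤ (({z} : Finset ℕ).card + 1) + 1 := by
        have := Finset.card_insert_le y ({z} : Finset ℕ); omega
    _ = 3 := by rw [Finset.card_singleton]

lemma card2 (x y : ℕ) : ({x, y} : Finset ℕ).card ≤ 2 := by
  calc ({x, y} : Finset ℕ).card ≤ ({y} : Finset ℕ).card + 1 := Finset.card_insert_le _ _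
    _ = 2 := by rw [Finset.card_singleton]

lemma four_mem {m n : ℕ} (hm : 2 ≤ m) (hmn : m ≤ n)
    (Ls : Sym2 (Fin m ⊕ Fin n) → Finset ℕ)
    (hLs : ∀ e ∈ (completeBipartiteGraph (Fin m) (Fin n)).edgeSet, 4 ≤ (Ls e).card) :
    ∃ c : Sym2 (Fin m ⊕ Fin n) → ℕ,
      (∀ e ∈ (completeBipartiteGraph (Fin m) (Fin n)).edgeSet, c e ∈ Ls e) ∧
      IsRainbowConnected (completeBipartiteGraph (Fin m) (Fin n)) c := by
  classical
  have hn2 : 2 ≤ n := le_trans hm hmn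
  set i0 : Fin m := ⟨0, by omega⟩ with hi0
  set i1 : Fin m := ⟨1, by omega⟩ with hi1
  set j0 : Fin n := ⟨0, by omega⟩ with hj0
  set j1 : Fin n := ⟨1, by omega⟩ with hj1
  have hi01 : i0 ≠ i1 := by simp [hi0, hi1, Fin.ext_iff]
  set L : Fin m → Fin n → Finset ℕ := fun i j => Ls s(Sum.inl i, Sum.inr j) with hLdef
  have hLc : ∀ i j, 4 ≤ (L i j).card := fun i j =>
    hLs _ ((completeBipartiteGraph _ _).mem_edgeSet.mpr (adjKG i j))
  set x00 : ℕ := avoidPick (L i0 j0) ∅ with hx00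
  set x10 : ℕ := avoidPick (L i1 j0) {x00} with hx10
  set r0 : Fin n → ℕ := fun j => avoidPick (L i0 j) {x00, x10} with hr0
  set r1 : Fin n → ℕ := fun j => avoidPick (L i1 j) {x00, x10, r0 j} with hr1
  set dg : Fin n → ℕ := fun j => if (j : ℕ) = 1 then r1 j
    else if h : (j : ℕ) < m then avoidPick (L ⟨(j : ℕ), h⟩ j) ∅ else 0 with hdg
  set a : Fin m → Fin n → ℕ := fun i j =>
    if j = j0 then (if i = i0 then x00 else avoidPick (L i j0) {x00})
    else if i = i0 then r0 j
    else if i = i1 then r1 j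
    else if (i : ℕ) = (j : ℕ) then dg j
    else if (j : ℕ) < m ∧ (j : ℕ) < (i : ℕ) then avoidPick (L i j) {dg j}
    else avoidPick (L i j) ∅ with ha
  -- spec facts
  have sx00 : x00 ∈ L i0 j0 :=
    (avoidPick_spec (s := L i0 j0) (bad := ∅)
      (by rw [Finset.card_empty]; have := hLc i0 j0; omega)).1
  have sx10 : x10 ∈ L i1 j0 ∧ x10 ∉ ({x00} : Finset ℕ) :=
    avoidPick_spec (by rw [Finset.card_singleton]; have := hLc i1 j0; omega)
  have sr0 : ∀ j, r0 j ∈ L i0 j ∧ r0 j ∉ ({x00, x10} : Finset ℕ) := fun j =>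
    avoidPick_spec (by have := card2 x00 x10; have := hLc i0 j; omega)
  have sr1 : ∀ j, r1 j ∈ L i1 j ∧ r1 j ∉ ({x00, x10, r0 j} : Finset ℕ) := fun j =>
    avoidPick_spec (by have := card3 x00 x10 (r0 j); have := hLc i1 j; omega)
  -- value computations
  have v00 : a i0 j0 = x00 := by rw [ha]; dsimp only; rw [if_pos rfl, if_pos rfl]
  have vc0 : ∀ i, i ≠ i0 → a i j0 = avoidPick (L i j0) {x00} := by
    intro i hi
    rw [ha]; dsimp only; rw [if_pos rfl, if_neg hi]
  have v10 : a i1 j0 = x10 := by rw [vc0 i1 (Ne.symm hi01), hx10]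
  have vr0 : ∀ j, j ≠ j0 → a i0 j = r0 j := by
    intro j hj
    rw [ha]; dsimp only; rw [if_neg hj, if_pos rfl]
  have vr1 : ∀ j, j ≠ j0 → a i1 j = r1 j := by
    intro j hj
    rw [ha]; dsimp only; rw [if_neg hj, if_neg (Ne.symm hi01), if_pos rfl]
  have vdg : ∀ (i : Fin m) (j : Fin n), (i : ℕ) = (j : ℕ) → 2 ≤ (i : ℕ) → a i j = dg j := by
    intro i j hij h2
    rw [ha]; dsimp only
    rw [if_neg (by simp [hj0, Fin.ext_iff]; omega), if_neg (by simp [hi0, Fin.ext_iff]; omega),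
      if_neg (by simp [hi1, Fin.ext_iff]; omega), if_pos hij]
  have vlow : ∀ (i : Fin m) (j : Fin n), 2 ≤ (i : ℕ) → j ≠ j0 → (j : ℕ) < m →
      (j : ℕ) < (i : ℕ) → a i j = avoidPick (L i j) {dg j} := by
    intro i j h2 hj hjm hji
    rw [ha]; dsimp only
    rw [if_neg hj, if_neg (by simp [hi0, Fin.ext_iff]; omega),
      if_neg (by simp [hi1, Fin.ext_iff]; omega), if_neg (by omega), if_pos ⟨hjm, hji⟩]
  have dg1 : dg j1 = r1 j1 := by rw [hdg]; dsimp only; rw [if_pos rfl]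
  have vdgval : ∀ (j : Fin n) (h : (j : ℕ) < m), 2 ≤ (j : ℕ) →
      dg j = avoidPick (L ⟨(j : ℕ), h⟩ j) ∅ := by
    intro j h h2
    rw [hdg]; dsimp only
    rw [if_neg (by omega), dif_pos h]
  -- membership
  have hmem : ∀ i j, a i j ∈ L i j := by
    intro i j
    rcases eq_or_ne j j0 with rfl | hj
    · rcases eq_or_ne i i0 with rfl | hi
      · rw [v00]; exact sx00
      · rw [vc0 i hi]
        exact (avoidPick_spec (by rw [Finset.card_singleton]; have := hLc i j0; omega)).1
    · rcases eq_or_ne i i0 with rfl | hi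
      · rw [vr0 j hj]; exact (sr0 j).1
      · rcases eq_or_ne i i1 with rfl | hi1'
        · rw [vr1 j hj]; exact (sr1 j).1
        · have h2 : 2 ≤ (i : ℕ) := by
            rcases Nat.lt_or_ge (i : ℕ) 2 with h | h
            · exfalso
              interval_cases h' : (i : ℕ)
              · exact hi (Fin.ext h')
              · exact hi1' (Fin.ext h')
            · exact h
          rcases eq_or_ne ((i : ℕ)) ((j : ℕ)) with hij | hij
          · rw [vdg i j hij h2]
            have hjm : (j : ℕ) < m := hij ▸ i.isLt
            rw [vdgval j hjm (hij ▸ h2)]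
            have : (⟨(j : ℕ), hjm⟩ : Fin m) = i := Fin.ext hij.symm
            rw [this]
            exact (avoidPick_spec (by rw [Finset.card_empty]; have := hLc i j; omega)).1
          · rw [ha]; dsimp only
            rw [if_neg hj, if_neg hi, if_neg hi1', if_neg hij]
            split
            · exact (avoidPick_spec
                (by rw [Finset.card_singleton]; have := hLc i j; omega)).1
            · exact (avoidPick_spec (by rw [Finset.card_empty]; have := hLc i j; omega)).1
  -- alpha ≠ beta
  have hane : ∀ j, a i0 j ≠ a i1 j := by
    intro j
    rcases eq_or_ne j j0 with rfl | hj
    · rw [v00, v10]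
      intro h
      exact sx10.2 (Finset.mem_singleton.mpr h.symm)
    · rw [vr0 j hj, vr1 j hj]
      intro h
      exact (sr1 j).2 (by rw [← h]; simp)
  -- rows pairwise distinct
  have hrows : ∀ i i' : Fin m, i ≠ i' → ∃ j, a i j ≠ a i' j := by
    have key : ∀ i i' : Fin m, (i : ℕ) < (i' : ℕ) → ∃ j, a i j ≠ a i' j := by
      intro i i' hlt
      rcases Nat.lt_or_ge (i : ℕ) 1 with h0 | h0'
      · -- i = i0
        have : i = i0 := Fin.ext (show (i : ℕ) = 0 by omega)
        subst this
        refine ⟨j0, ?_⟩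
        rw [v00, vc0 i' (by intro h; rw [h] at hlt; exact absurd hlt (lt_irrefl _))]
        have := (avoidPick_spec (s := L i' j0) (bad := {x00})
          (by rw [Finset.card_singleton]; have := hLc i' j0; omega)).2
        intro h
        exact this (Finset.mem_singleton.mpr h.symm)
      rcases Nat.lt_or_ge (i : ℕ) 2 with h1 | h2
      · -- i = i1
        have : i = i1 := Fin.ext (show (i : ℕ) = 1 by omega)
        subst this
        have hi'2 : 2 ≤ (i' : ℕ) := by simp [hi1] at hlt; omega
        refine ⟨j1, ?_⟩
        have hj10 : j1 ≠ j0 := by simp [hj1, hj0, Fin.ext_iff]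
        rw [vr1 j1 hj10, vlow i' j1 hi'2 hj10 (by simp [hj1]; omega) (by simp [hj1]; omega)]
        have := (avoidPick_spec (s := L i' j1) (bad := {dg j1})
          (by rw [Finset.card_singleton]; have := hLc i' j1; omega)).2
        intro h
        exact this (Finset.mem_singleton.mpr (by rw [dg1]; exact h.symm))
      · -- 2 ≤ i
        have hjlt : (i : ℕ) < n := lt_of_lt_of_le i.isLt hmn
        refine ⟨⟨(i : ℕ), hjlt⟩, ?_⟩
        have hjv : ((⟨(i : ℕ), hjlt⟩ : Fin n) : ℕ) = (i : ℕ) := rfl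
        rw [vdg i ⟨(i : ℕ), hjlt⟩ rfl h2,
          vlow i' ⟨(i : ℕ), hjlt⟩ (by omega) (by simp [hj0, Fin.ext_iff]; omega) (by rw [hjv]; exact i.isLt) (by rw [hjv]; exact hlt)]
        have := (avoidPick_spec (s := L i' ⟨(i : ℕ), hjlt⟩) (bad := {dg ⟨(i : ℕ), hjlt⟩})
          (by rw [Finset.card_singleton]; have := hLc i' ⟨(i : ℕ), hjlt⟩; omega)).2
        intro h
        exact this (by rw [← h]; exact Finset.mem_singleton_self _)
    intro i i' hne
    rcases lt_or_gt_of_ne (fun h : (i : ℕ) = (i' : ℕ) => hne (Fin.ext h)) with h | h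
    · exact key i i' h
    · obtain ⟨j, hj⟩ := key i' i h
      exact ⟨j, hj.symm⟩
  refine ⟨toC a, toC_mem a Ls hmem, rainbow_of (toC a) ?_ ?_⟩
  · intro i i' hne
    obtain ⟨j, hj⟩ := hrows i i' hne
    exact ⟨j, by simpa using hj⟩
  · intro j j' hne
    by_cases h0 : a i0 j ≠ a i0 j'
    · refine path2 (toC a) (adjKG i0 j).symm (adjKG i0 j') (by simp [hne]) ?_
      simpa using h0
    by_cases h1 : a i1 j ≠ a i1 j'
    · refine path2 (toC a) (adjKG i1 j).symm (adjKG i1 j') (by simp [hne]) ?_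
      simpa using h1
    push_neg at h0 h1
    -- both rows agree on j, j'; use a length-4 path through j0
    have hjj0 : j ≠ j0 := by
      rintro rfl
      have hj'0 : j' ≠ j0 := Ne.symm hne
      rw [v00, vr0 j' hj'0] at h0
      exact (sr0 j').2 (Finset.mem_insert.mpr (Or.inl h0.symm))
    have hj'j0 : j' ≠ j0 := by
      rintro rfl
      have : j ≠ j0 := hne
      rw [v00, vr0 j this] at h0
      exact (sr0 j).2 (Finset.mem_insert.mpr (Or.inl h0))
    refine path4 (toC a) (v1 := Sum.inr j) (v2 := Sum.inl i0) (v3 := Sum.inr j0)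
      (v4 := Sum.inl i1) (v5 := Sum.inr j')
      (adjKG i0 j).symm (adjKG i0 j0) (adjKG i1 j0).symm (adjKG i1 j')
      (by simp [hjj0]) (by simp) (by simp [hne]) (by simp [hi01]) (by simp)
      (by simp [Ne.symm hj'j0]) ?_ ?_ ?_ ?_ ?_ ?_
    · -- r0 j ≠ x00
      simp only [toC_rl, toC_lr]
      rw [vr0 j hjj0, v00]
      intro h
      exact (sr0 j).2 (Finset.mem_insert.mpr (Or.inl h))
    · -- r0 j ≠ x10
      simp only [toC_rl, toC_lr]
      rw [vr0 j hjj0, v10]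
      intro h
      exact (sr0 j).2 (Finset.mem_insert.mpr (Or.inr (Finset.mem_singleton.mpr h)))
    · -- r0 j ≠ r1 j'
      simp only [toC_rl, toC_lr]
      rw [vr0 j hjj0, vr1 j' hj'j0]
      have e1 : r1 j = r1 j' := by
        rw [← vr1 j hjj0, ← vr1 j' hj'j0]
        exact h1
      rw [← e1]
      intro h
      exact (sr1 j).2 (Finset.mem_insert.mpr (Or.inr (Finset.mem_insert.mpr
        (Or.inr (Finset.mem_singleton.mpr h.symm)))))
    · -- x00 ≠ x10
      simp only [toC_rl, toC_lr]
      rw [v00, v10]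
      intro h
      exact sx10.2 (Finset.mem_singleton.mpr h.symm)
    · -- x00 ≠ r1 j'
      simp only [toC_rl, toC_lr]
      rw [v00, vr1 j' hj'j0]
      intro h
      exact (sr1 j').2 (Finset.mem_insert.mpr (Or.inl h.symm))
    · -- x10 ≠ r1 j'
      simp only [toC_rl, toC_lr]
      rw [v10, vr1 j' hj'j0]
      intro h
      exact (sr1 j').2 (Finset.mem_insert.mpr (Or.inr (Finset.mem_insert.mpr (Or.inl h.symm))))

lemma lower_not_mem {m n r : ℕ} (hm : 1 ≤ m) (hr : r ≤ 3) (hn : r ^ m < n) :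
    ¬ (∀ Ls : Sym2 (Fin m ⊕ Fin n) → Finset ℕ,
        (∀ e ∈ (completeBipartiteGraph (Fin m) (Fin n)).edgeSet, r ≤ (Ls e).card) →
        ∃ c : Sym2 (Fin m ⊕ Fin n) → ℕ,
          (∀ e ∈ (completeBipartiteGraph (Fin m) (Fin n)).edgeSet, c e ∈ Ls e) ∧
          IsRainbowConnected (completeBipartiteGraph (Fin m) (Fin n)) c) := by
  classical
  intro H
  obtain ⟨c, hc, hrb⟩ := H (fun _ => Finset.range r) (fun e _ => by rw [Finset.card_range])
  have hmem : ∀ (i : Fin m) (j : Fin n), c s(Sum.inl i, Sum.inr j) < r := by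
    intro i j
    have := hc _ ((completeBipartiteGraph _ _).mem_edgeSet.mpr (adjKG i j))
    simpa [Finset.mem_range] using this
  have hcard : Fintype.card (Fin m → Fin r) < Fintype.card (Fin n) := by
    rw [Fintype.card_fun, Fintype.card_fin, Fintype.card_fin, Fintype.card_fin]
    exact hn
  obtain ⟨j, j', hne, hvec⟩ := Fintype.exists_ne_map_eq_of_card_lt
    (fun j : Fin n => fun i : Fin m => (⟨c s(Sum.inl i, Sum.inr j), hmem i j⟩ : Fin r)) hcard
  have hcc : ∀ i : Fin m, c s(Sum.inl i, Sum.inr j) = c s(Sum.inl i, Sum.inr j') := by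
    intro i
    have := congrFun hvec i
    exact congrArg Fin.val this
  obtain ⟨p, hp, hnd⟩ := hrb (Sum.inr j) (Sum.inr j')
  have hedges : ∀ e ∈ p.edges, c e < r := by
    intro e he
    have := hc e (p.edges_subset_edgeSet he)
    simpa [Finset.mem_range] using this
  have hlenle : p.length ≤ r := by
    have h1 : (p.edges.map c).toFinset ⊆ Finset.range r := by
      intro x hx
      rw [List.mem_toFinset] at hx
      obtain ⟨e, he, rfl⟩ := List.mem_map.mp hx
      exact Finset.mem_range.mpr (hedges e he)
    have h2 := Finset.card_le_card h1
    rw [List.toFinset_card_of_nodup hnd, List.length_map, Finset.card_range] at h2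
    rw [← SimpleGraph.Walk.length_edges]
    exact h2
  have heven : Even p.length := (walk_parity p).mpr (by simp)
  have hpos : p.length ≠ 0 := by
    intro h0
    have := SimpleGraph.Walk.eq_of_length_eq_zero h0
    simp at this
    exact hne this
  have hl2 : p.length = 2 := by
    rw [Nat.even_iff] at heven
    omega
  cases p with
  | nil => simp at hl2
  | @cons _ x _ h q =>
    cases q with
    | nil => simp at hl2
    | @cons _ y _ h' q' =>
      cases q' with
      | cons h'' q'' => simp [SimpleGraph.Walk.length_cons] at hl2
      | nil =>
        rcases x with i | jx
        · simp only [SimpleGraph.Walk.edges_cons, SimpleGraph.Walk.edges_nil,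
            List.map_cons, List.map_nil, List.nodup_cons] at hnd
          apply hnd.1
          simp only [List.mem_cons, List.mem_singleton]
          left
          rw [Sym2.eq_swap (a := Sum.inr j)]
          exact hcc i
        · exact absurd h (by simp)

/-- Theorem: for `2 ≤ m ≤ n`, `rc^ℓ(K_{m,n}) = min(⌈n^{1/m}⌉, 4)`. -/
theorem stmt15 (m n : ℕ) (hm : 2 ≤ m) (hmn : m ≤ n) :
    rcl (completeBipartiteGraph (Fin m) (Fin n)) = min (sInf {r : ℕ | n ≤ r ^ m}) 4 := by
  have hn2 : 2 ≤ n := le_trans hm hmn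
  set t := sInf {r : ℕ | n ≤ r ^ m} with ht
  have htne : {r : ℕ | n ≤ r ^ m}.Nonempty := ⟨n, Nat.le_self_pow (by omega) n⟩
  have htmem : n ≤ t ^ m := Nat.sInf_mem htne
  have ht2 : 2 ≤ t := by
    rcases Nat.lt_or_ge t 2 with h | h
    · exfalso
      have : t ^ m ≤ 1 := by
        calc t ^ m ≤ 1 ^ m := Nat.pow_le_pow_left (by omega) m
          _ = 1 := one_pow m
      omega
    · exact h
  have hlow : ∀ r : ℕ, r < t → r ^ m < n := by
    intro r hr
    by_contra hcon
    push_neg at hcon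
    have h2 : sInf {r' : ℕ | n ≤ r' ^ m} ≤ r :=
      Nat.sInf_le (show r ∈ {r' : ℕ | n ≤ r' ^ m} from hcon)
    rw [← ht] at h2
    omega
  have hmemS : (min t 4) ∈ {r : ℕ | ∀ L : Sym2 (Fin m ⊕ Fin n) → Finset ℕ,
      (∀ e ∈ (completeBipartiteGraph (Fin m) (Fin n)).edgeSet, r ≤ (L e).card) →
      ∃ c : Sym2 (Fin m ⊕ Fin n) → ℕ,
        (∀ e ∈ (completeBipartiteGraph (Fin m) (Fin n)).edgeSet, c e ∈ L e) ∧
        IsRainbowConnected (completeBipartiteGraph (Fin m) (Fin n)) c} := by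
    intro Ls hLs
    rcases le_or_gt t 4 with ht4 | ht4
    · rw [min_eq_left ht4] at hLs
      exact upper_mem ht2 hmn htmem Ls hLs
    · rw [min_eq_right (le_of_lt ht4)] at hLs
      exact four_mem hm hmn Ls hLs
  rw [rcl]
  apply le_antisymm
  · exact Nat.sInf_le hmemS
  · by_contra hcon
    push_neg at hcon
    have hne : Set.Nonempty {r : ℕ | ∀ L : Sym2 (Fin m ⊕ Fin n) → Finset ℕ,
        (∀ e ∈ (completeBipartiteGraph (Fin m) (Fin n)).edgeSet, r ≤ (L e).card) →
        ∃ c : Sym2 (Fin m ⊕ Fin n) → ℕ,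
          (∀ e ∈ (completeBipartiteGraph (Fin m) (Fin n)).edgeSet, c e ∈ L e) ∧
          IsRainbowConnected (completeBipartiteGraph (Fin m) (Fin n)) c} := ⟨min t 4, hmemS⟩
    have hmem2 := Nat.sInf_mem hne
    simp only [Set.mem_setOf_eq] at hmem2
    refine lower_not_mem ?_ ?_ ?_ hmem2
    · exact le_trans one_le_two hm
    · exact Nat.lt_succ_iff.mp (lt_of_lt_of_le hcon (min_le_right _ _))
    · exact hlow _ (lt_of_lt_of_le hcon (min_le_left _ _))
end
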